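/- Let r ≥ 3 and let S = E_1 ∪ ⋯ ∪ E_{r−1}. For each i with 0 ≤ i ≤ r−1, the number of faces A of (M_r)^{*2}_Δ of cardinality r+i whose maximal containing facet has cardinality exactly 2r−1 equals 2·f_i(M_r|S), where f_i(M_r|S) is the number of faces of cardinality i of the restriction M_r|S. Moreover there are no such faces of cardinality less than r. -/

import Mathlib

/-- Independence in the matroid `M_r` (ground set `Fin r × Fin r`; `(i,j)` is `v_{i+1}^{j+1}`
for `i < r-1` and `w_{j+1}` for `i = r-1`). -/
def MrIndep (r : ℕ) (A : Finset (Fin r × Fin r)) : Prop :=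
  A.card ≤ r ∧ ∀ i : Fin r, (i : ℕ) < r - 1 → (A.filter (fun p => p.1 = i)).card ≤ 1

/-- A face of the `2`-fold deleted join `(M_r)^{*2}_Δ`: a pair of disjoint independent sets. -/
def Face2 (r : ℕ) (p : Finset (Fin r × Fin r) × Finset (Fin r × Fin r)) : Prop :=
  MrIndep r p.1 ∧ MrIndep r p.2 ∧ Disjoint p.1 p.2

/-- `DegEq r p n` says the degree of the face `p` is `n`: some face of cardinality `n`
contains `p`, and every face containing `p` has cardinality at most `n`. -/
def DegEq (r : ℕ) (p : Finset (Fin r × Fin r) × Finset (Fin r × Fin r)) (n : ℕ) : Prop :=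
  (∃ q, Face2 r q ∧ p.1 ⊆ q.1 ∧ p.2 ⊆ q.2 ∧ q.1.card + q.2.card = n) ∧
  (∀ q, Face2 r q → p.1 ⊆ q.1 → p.2 ⊆ q.2 → q.1.card + q.2.card ≤ n)

/-- A face of the restriction `M_r|S`, `S = E_1 ∪ ⋯ ∪ E_{r-1}`. -/
def FaceS (r : ℕ) (A : Finset (Fin r × Fin r)) : Prop :=
  (∀ p ∈ A, (p.1 : ℕ) < r - 1) ∧
  ∀ i : Fin r, (A.filter (fun p => p.1 = i)).card ≤ 1

/-!
A face `(A, B)` of degree `2r - 1` lies in a face `q` of size `2r - 1` to whose smaller side nothing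
can be added without reaching size `2r`. Such a `q` must be `W` together with a transversal `T` of
the blocks `E_1, …, E_{r-1}`, and the side of `(A, B)` under `W` must be all of `W`: if it missed
some `w`, moving `w` over to `T` and replacing it by a free vertex of `E_1` would give a face of
size `2r` containing `(A, B)`. Conversely `(W, B)` has degree `2r - 1`, since the opposite side of
any face above it avoids `W` and so has at most `r - 1` vertices. Hence the faces of degree `2r - 1`
are exactly `(W, B)` and `(B, W)` for faces `B` of `M_r|S`, which gives both claims.
-/

open Finset

section MrFaces

variable {r : ℕ}

/-- The row `W = {w_1, …, w_r}` of the ground set of `M_r`. -/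
def lastRow (r : ℕ) : Finset (Fin r × Fin r) := {p | (p.1 : ℕ) = r - 1}

lemma mem_lastRow {p : Fin r × Fin r} : p ∈ lastRow r ↔ (p.1 : ℕ) = r - 1 := by
  simp [lastRow]

lemma card_lastRow : #(lastRow r) = r := by
  cases r with
  | zero => rfl
  | succ n =>
    have : lastRow (n + 1) = {Fin.last n} ×ˢ univ := by
      ext ⟨i, j⟩
      simp [mem_lastRow, Fin.ext_iff, eq_comm]
    simp [this]

lemma card_filter_insert_le_one {A : Finset (Fin r × Fin r)} {x : Fin r × Fin r} {i : Fin r}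
    (hA : #{p ∈ A | p.1 = i} ≤ 1) (hx : x.1 = i → ∀ p ∈ A, p.1 ≠ i) :
    #{p ∈ insert x A | p.1 = i} ≤ 1 := by
  rw [filter_insert]
  split_ifs with h
  · rw [filter_eq_empty_iff.mpr (hx h)]
    simp
  · exact hA

lemma exists_notMem_of_card_filter_le_one (hr : 2 ≤ r) {C : Finset (Fin r × Fin r)} {i : Fin r}
    (h : #{p ∈ C | p.1 = i} ≤ 1) : ∃ c, (i, c) ∉ C := by
  by_contra! hall
  have := card_le_one.mp h (i, ⟨0, by omega⟩) (by simp [hall]) (i, ⟨1, by omega⟩) (by simp [hall])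
  simp at this

lemma card_le_pred_of_rows {C : Finset (Fin r × Fin r)} (hrow : ∀ p ∈ C, (p.1 : ℕ) < r - 1)
    (hfib : ∀ i : Fin r, (i : ℕ) < r - 1 → #{p ∈ C | p.1 = i} ≤ 1) : #C ≤ r - 1 :=
  calc #C ≤ #{i : Fin r | (i : ℕ) < r - 1} :=
        card_le_card_of_injOn Prod.fst (fun p hp => by simpa using hrow p hp)
          fun p hp q hq h => card_le_one.mp (hfib _ (hrow p hp)) p (by simp [mem_coe.mp hp]) q
            (by simp [mem_coe.mp hq, h])
    _ = r - 1 := by rw [Fin.card_filter_val_lt]; omega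

lemma pred_le_card_of_meets_rows {T : Finset (Fin r × Fin r)}
    (hmeet : ∀ i : Fin r, (i : ℕ) < r - 1 → ∃ p ∈ T, p.1 = i) : r - 1 ≤ #T :=
  calc r - 1 = #{i : Fin r | (i : ℕ) < r - 1} := by rw [Fin.card_filter_val_lt]; omega
    _ ≤ #(T.image Prod.fst) := card_le_card fun i hi => by
        obtain ⟨p, hp, rfl⟩ := hmeet i (by simpa using hi)
        exact mem_image_of_mem _ hp
    _ ≤ #T := card_image_le

lemma rows_lt_of_card_le_of_meets_rows (hr : 2 ≤ r) {T : Finset (Fin r × Fin r)}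
    (hT : #T ≤ r - 1) (hmeet : ∀ i : Fin r, (i : ℕ) < r - 1 → ∃ p ∈ T, p.1 = i) :
    ∀ p ∈ T, (p.1 : ℕ) < r - 1 := by
  intro p hp
  by_contra hrow
  have := pred_le_card_of_meets_rows (T := T.erase p) fun i hi => by
    obtain ⟨q, hq, rfl⟩ := hmeet i hi
    exact ⟨q, mem_erase.mpr ⟨by rintro rfl; exact hrow hi, hq⟩, rfl⟩
  rw [card_erase_of_mem hp] at this
  omega

lemma MrIndep.mono {A B : Finset (Fin r × Fin r)} (hB : MrIndep r B) (hAB : A ⊆ B) :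
    MrIndep r A :=
  ⟨(card_le_card hAB).trans hB.1,
    fun i hi => (card_le_card (filter_subset_filter _ hAB)).trans (hB.2 i hi)⟩

lemma MrIndep.insert {A : Finset (Fin r × Fin r)} {x : Fin r × Fin r} (hA : MrIndep r A)
    (hcard : #A < r) (hx : (x.1 : ℕ) < r - 1 → ∀ p ∈ A, p.1 ≠ x.1) :
    MrIndep r (insert x A) :=
  ⟨(card_insert_le _ _).trans hcard,
    fun i hi => card_filter_insert_le_one (hA.2 i hi) fun hxi => hxi ▸ hx (hxi ▸ hi)⟩

lemma mrIndep_lastRow : MrIndep r (lastRow r) := by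
  refine ⟨card_lastRow.le, fun i hi => ?_⟩
  rw [filter_eq_empty_iff.mpr fun p hp hpi => by rw [mem_lastRow, hpi] at hp; omega]
  simp

lemma FaceS.mono {A B : Finset (Fin r × Fin r)} (hB : FaceS r B) (hAB : A ⊆ B) : FaceS r A :=
  ⟨fun p hp => hB.1 p (hAB hp),
    fun i => (card_le_card (filter_subset_filter _ hAB)).trans (hB.2 i)⟩

lemma FaceS.card_le {A : Finset (Fin r × Fin r)} (hA : FaceS r A) : #A ≤ r - 1 :=
  card_le_pred_of_rows hA.1 fun i _ => hA.2 i

lemma FaceS.mrIndep {A : Finset (Fin r × Fin r)} (hA : FaceS r A) : MrIndep r A :=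
  ⟨hA.card_le.trans (Nat.sub_le r 1), fun i _ => hA.2 i⟩

lemma FaceS.insert {A : Finset (Fin r × Fin r)} (hA : FaceS r A) {i c : Fin r}
    (hi : (i : ℕ) < r - 1) (hmiss : ∀ p ∈ A, p.1 ≠ i) : FaceS r (insert (i, c) A) :=
  ⟨by simpa [hi] using hA.1,
    fun j => card_filter_insert_le_one (hA.2 j) fun hij => hij ▸ hmiss⟩

lemma faceS_of_mrIndep {A : Finset (Fin r × Fin r)} (hA : MrIndep r A)
    (hrow : ∀ p ∈ A, (p.1 : ℕ) < r - 1) : FaceS r A := by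
  refine ⟨hrow, fun i => ?_⟩
  by_cases hi : (i : ℕ) < r - 1
  · exact hA.2 i hi
  · rw [filter_eq_empty_iff.mpr fun p hp (hpi : p.1 = i) => hi (hpi ▸ hrow p hp)]
    simp

lemma not_faceS_lastRow (hr : 1 ≤ r) : ¬ FaceS r (lastRow r) := fun h =>
  lt_irrefl _ (h.1 (⟨r - 1, by omega⟩, ⟨0, by omega⟩) (mem_lastRow.mpr rfl))

lemma disjoint_lastRow {A : Finset (Fin r × Fin r)} (hrow : ∀ p ∈ A, (p.1 : ℕ) < r - 1) :
    Disjoint (lastRow r) A :=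
  disjoint_left.mpr fun p hp hpA => by have := hrow p hpA; rw [mem_lastRow] at hp; omega

lemma exists_faceS_superset_card_eq {B : Finset (Fin r × Fin r)} (hB : FaceS r B) :
    ∃ T, B ⊆ T ∧ FaceS r T ∧ #T = r - 1 := by
  classical
  obtain ⟨T, hT, hmax⟩ := exists_max_image {T | B ⊆ T ∧ FaceS r T} card ⟨B, by simp [hB]⟩
  simp only [mem_filter, mem_univ, true_and] at hT hmax
  refine ⟨T, hT.1, hT.2, le_antisymm hT.2.card_le (pred_le_card_of_meets_rows fun i hi => ?_)⟩
  by_contra! hmiss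
  have := hmax (insert (i, i) T) ⟨hT.1.trans (subset_insert _ _), hT.2.insert hi hmiss⟩
  rw [card_insert_of_notMem fun h => hmiss _ h rfl] at this
  omega

lemma Face2.swap {p : Finset (Fin r × Fin r) × Finset (Fin r × Fin r)} (h : Face2 r p) :
    Face2 r p.swap :=
  ⟨h.2.1, h.1, h.2.2.symm⟩

lemma DegEq.swap {p : Finset (Fin r × Fin r) × Finset (Fin r × Fin r)} {n : ℕ}
    (h : DegEq r p n) : DegEq r p.swap n := by
  obtain ⟨⟨q, hq, h1, h2, hc⟩, hub⟩ := h
  refine ⟨⟨q.swap, hq.swap, h2, h1, by simpa [add_comm] using hc⟩, fun q' hq' h1 h2 => ?_⟩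
  simpa [add_comm] using hub q'.swap hq'.swap h2 h1

lemma face2_lastRow {T : Finset (Fin r × Fin r)} (hT : FaceS r T) : Face2 r (lastRow r, T) :=
  ⟨mrIndep_lastRow, hT.mrIndep, disjoint_lastRow hT.1⟩

lemma degEq_lastRow {B : Finset (Fin r × Fin r)} (hB : FaceS r B) :
    DegEq r (lastRow r, B) (2 * r - 1) := by
  refine ⟨?_, fun q hq hW _ => ?_⟩
  · obtain ⟨T, hBT, hT, hTcard⟩ := exists_faceS_superset_card_eq hB
    refine ⟨(lastRow r, T), face2_lastRow hT, subset_rfl, hBT, ?_⟩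
    simp only [card_lastRow, hTcard]
    omega
  · have hrow : ∀ p ∈ q.2, (p.1 : ℕ) < r - 1 := fun p hp => by
      have hpW : p ∉ lastRow r := fun h => disjoint_left.mp hq.2.2 (hW h) hp
      rw [mem_lastRow] at hpW
      omega
    have := card_le_pred_of_rows hrow hq.2.1.2
    have := hq.1.1
    omega

lemma eq_lastRow_and_faceS_of_maximal (hr : 2 ≤ r) {q₁ q₂ : Finset (Fin r × Fin r)}
    (h₁ : MrIndep r q₁) (h₂ : MrIndep r q₂) (hc₂ : #q₂ = r - 1)
    (hmax : ∀ x, x ∉ q₁ → x ∉ q₂ → ¬ MrIndep r (insert x q₂)) :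
    q₁ = lastRow r ∧ FaceS r q₂ := by
  have hW : ∀ w ∈ lastRow r, w ∈ q₁ ∨ w ∈ q₂ := by
    intro w hw
    by_contra! hout
    refine hmax w hout.1 hout.2 (h₂.insert (by omega) fun hw' => ?_)
    rw [mem_lastRow] at hw
    omega
  have hmeet : ∀ i : Fin r, (i : ℕ) < r - 1 → ∃ p ∈ q₂, p.1 = i := by
    intro i hi
    by_contra! hmiss
    obtain ⟨c, hc⟩ := exists_notMem_of_card_filter_le_one hr (h₁.2 i hi)
    exact hmax (i, c) hc (fun h => hmiss _ h rfl) (h₂.insert (by omega) fun _ => hmiss)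
  have hrow := rows_lt_of_card_le_of_meets_rows hr hc₂.le hmeet
  refine ⟨(eq_of_subset_of_card_le (fun w hw => ?_) (by rw [card_lastRow]; exact h₁.1)).symm,
    faceS_of_mrIndep h₂ hrow⟩
  refine (hW w hw).resolve_right fun h => ?_
  have := hrow w h
  rw [mem_lastRow] at hw
  omega

/-- Moving `w ∈ W` into a transversal of the blocks, and replacing it by a free vertex of `E_1`,
yields a face of size `2r`. -/
lemma exists_face2_erase_lastRow (hr : 2 ≤ r) {T : Finset (Fin r × Fin r)} (hT : FaceS r T)
    (hTcard : #T = r - 1) {w : Fin r × Fin r} (hw : w ∈ lastRow r) :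
    ∃ q, Face2 r q ∧ (lastRow r).erase w ⊆ q.1 ∧ T ⊆ q.2 ∧ #q.1 + #q.2 = 2 * r := by
  have hw' := mem_lastRow.mp hw
  let i₀ : Fin r := ⟨0, by omega⟩
  obtain ⟨c, hc⟩ := exists_notMem_of_card_filter_le_one hr (hT.2 i₀)
  have hwT : w ∉ T := fun h => by have := hT.1 w h; omega
  have hx : (i₀, c) ∉ (lastRow r).erase w := fun h => by
    have := mem_lastRow.mp (mem_of_mem_erase h)
    simp only [i₀] at this
    omega
  have hcard₁ : #(insert (i₀, c) ((lastRow r).erase w)) = r := by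
    rw [card_insert_of_notMem hx, card_erase_of_mem hw, card_lastRow]
    omega
  have hcard₂ : #(insert w T) = r := by
    rw [card_insert_of_notMem hwT]
    omega
  refine ⟨(insert (i₀, c) ((lastRow r).erase w), insert w T), ⟨?_, ?_, ?_⟩,
    subset_insert _ _, subset_insert _ _, by simp only [hcard₁, hcard₂]; omega⟩
  · refine (mrIndep_lastRow.mono (erase_subset w _)).insert ?_ fun _ p hp hpi => ?_
    · rw [card_erase_of_mem hw, card_lastRow]
      omega
    · have := mem_lastRow.mp (mem_of_mem_erase hp)
      rw [hpi] at this
      simp only [i₀] at this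
      omega
  · exact hT.mrIndep.insert (by omega) fun h => by omega
  · simp only [disjoint_insert_left, disjoint_insert_right, mem_insert, not_or]
    refine ⟨⟨fun h => ?_, notMem_erase w _⟩, hc,
      disjoint_of_subset_left (erase_subset w _) (disjoint_lastRow hT.1)⟩
    rw [h] at hw'
    simp only [i₀] at hw'
    omega

lemma eq_lastRow_and_faceS_of_degEq (hr : 2 ≤ r)
    {p q : Finset (Fin r × Fin r) × Finset (Fin r × Fin r)} (hd : DegEq r p (2 * r - 1))
    (hq : Face2 r q) (h₁ : p.1 ⊆ q.1) (h₂ : p.2 ⊆ q.2) (hc₁ : #q.1 = r) (hc₂ : #q.2 = r - 1) :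
    p.1 = lastRow r ∧ FaceS r p.2 := by
  have hmax : ∀ x, x ∉ q.1 → x ∉ q.2 → ¬ MrIndep r (insert x q.2) := by
    intro x hx₁ hx₂ hind
    have := hd.2 (q.1, insert x q.2) ⟨hq.1, hind, disjoint_insert_right.mpr ⟨hx₁, hq.2.2⟩⟩
      h₁ (h₂.trans (subset_insert _ _))
    dsimp only at this
    rw [card_insert_of_notMem hx₂] at this
    omega
  obtain ⟨hq₁, hq₂⟩ := eq_lastRow_and_faceS_of_maximal hr hq.1 hq.2.1 hc₂ hmax
  refine ⟨?_, hq₂.mono h₂⟩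
  by_contra hne
  obtain ⟨w, hw, hwp⟩ := exists_of_ssubset (lt_of_le_of_ne (hq₁ ▸ h₁) hne)
  obtain ⟨q', hq', hW, hT, hcard⟩ := exists_face2_erase_lastRow hr hq₂ hc₂ hw
  have := hd.2 q' hq' (fun z hz => hW (mem_erase.mpr ⟨by rintro rfl; exact hwp hz, hq₁ ▸ h₁ hz⟩))
    (h₂.trans hT)
  omega

theorem DegEq.eq_lastRow (hr : 2 ≤ r) {p : Finset (Fin r × Fin r) × Finset (Fin r × Fin r)}
    (hd : DegEq r p (2 * r - 1)) :
    (p.1 = lastRow r ∧ FaceS r p.2) ∨ (p.2 = lastRow r ∧ FaceS r p.1) := by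
  obtain ⟨q, hq, h₁, h₂, hc⟩ := hd.1
  have := hq.1.1
  have := hq.2.1.1
  rcases (by omega : #q.1 = r ∧ #q.2 = r - 1 ∨ #q.2 = r ∧ #q.1 = r - 1) with ⟨ha, hb⟩ | ⟨ha, hb⟩
  · exact .inl (eq_lastRow_and_faceS_of_degEq hr hd hq h₁ h₂ ha hb)
  · exact .inr (eq_lastRow_and_faceS_of_degEq hr hd.swap hq.swap h₂ h₁ ha hb)

theorem face2_and_degEq_iff (hr : 2 ≤ r) {p : Finset (Fin r × Fin r) × Finset (Fin r × Fin r)} :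
    Face2 r p ∧ DegEq r p (2 * r - 1) ↔
      (p.1 = lastRow r ∧ FaceS r p.2) ∨ (p.2 = lastRow r ∧ FaceS r p.1) := by
  refine ⟨fun h => h.2.eq_lastRow hr, ?_⟩
  rintro (⟨h₁, h₂⟩ | ⟨h₁, h₂⟩)
  · obtain ⟨A, B⟩ := p
    subst h₁
    exact ⟨face2_lastRow h₂, degEq_lastRow h₂⟩
  · obtain ⟨A, B⟩ := p
    subst h₁
    exact ⟨(face2_lastRow h₂).swap, (degEq_lastRow h₂).swap⟩

end MrFaces

lemma ncard_image_pair_union_image_pair {α : Type*} [Finite α] {s : Set α} {a : α} (ha : a ∉ s) :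
    ((fun b => (a, b)) '' s ∪ (fun b => (b, a)) '' s).ncard = 2 * s.ncard := by
  have hdisj : Disjoint ((fun b => (a, b)) '' s) ((fun b => (b, a)) '' s) := by
    rw [Set.disjoint_left]
    rintro _ ⟨b, -, rfl⟩ ⟨b', hb', h⟩
    simp only [Prod.mk.injEq] at h
    exact ha (h.1 ▸ hb')
  rw [Set.ncard_union_eq hdisj, Set.ncard_image_of_injective _ (Prod.mk_right_injective a),
    Set.ncard_image_of_injective _ (Prod.mk_left_injective a)]
  omega

/-- For `0 ≤ i ≤ r-1`, the number of faces of `(M_r)^{*2}_Δ` of cardinality `r+i` whose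
maximal containing facet has cardinality exactly `2r-1` equals `2 ⬝ f_i(M_r|S)`; and there
are no such faces of cardinality less than `r`. -/
theorem stmt6 (r : ℕ) (hr : 3 ≤ r) :
    (∀ i : ℕ, i ≤ r - 1 →
      {p : Finset (Fin r × Fin r) × Finset (Fin r × Fin r) |
        Face2 r p ∧ p.1.card + p.2.card = r + i ∧ DegEq r p (2 * r - 1)}.ncard =
      2 * {A : Finset (Fin r × Fin r) | FaceS r A ∧ A.card = i}.ncard) ∧
    (∀ p : Finset (Fin r × Fin r) × Finset (Fin r × Fin r),
      Face2 r p → DegEq r p (2 * r - 1) → r ≤ p.1.card + p.2.card) := by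
  have hr₂ : 2 ≤ r := by omega
  refine ⟨fun i _ => ?_, fun p _ hd => ?_⟩
  · have hset : {p : Finset (Fin r × Fin r) × Finset (Fin r × Fin r) |
          Face2 r p ∧ p.1.card + p.2.card = r + i ∧ DegEq r p (2 * r - 1)} =
        (fun B => (lastRow r, B)) '' {A | FaceS r A ∧ #A = i} ∪
          (fun B => (B, lastRow r)) '' {A | FaceS r A ∧ #A = i} := by
      ext ⟨A, B⟩
      simp only [Set.mem_ofPred_eq, Set.mem_union, Set.mem_image, Prod.mk.injEq]
      rw [and_left_comm, face2_and_degEq_iff hr₂]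
      grind [card_lastRow]
    rw [hset, ncard_image_pair_union_image_pair fun h => not_faceS_lastRow (by omega) h.1]
  · rcases hd.eq_lastRow hr₂ with ⟨h, -⟩ | ⟨h, -⟩ <;> simp only [h, card_lastRow] <;> omega
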